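/- arXiv:2408.03766 — 9 statements merged into one kernel-verified Lean document; each statement's English description precedes it below -/
import Mathlib

section
/- Let A be a skew left brace with opposite lambda map λᵒᵖ_a(b) = (a∘b)·a⁻¹, and let Λ_A = (A,·) ⋊_λ (A,∘) and Λ_{Aᵒᵖ} = (A,·) ⋊_{λᵒᵖ} (A,∘) be the semidirect products via λ and λᵒᵖ respectively. Then the map ψ : Λ_{Aᵒᵖ} → Λ_A given by ψ(a,b) = (a·b, b) is a group isomorphism. -/
/-- A skew left brace: a type with a group structure `(A, *)` (the additive group,
written multiplicatively) and a second group structure `(A, ∘)` (given by `circ`),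
satisfying `a ∘ (b * c) = (a ∘ b) * a⁻¹ * (a ∘ c)`. -/
class SkewLeftBrace (A : Type*) extends Group A where
  circ : A → A → A
  circ_assoc : ∀ a b c : A, circ (circ a b) c = circ a (circ b c)
  one_circ : ∀ a : A, circ 1 a = a
  circ_one : ∀ a : A, circ a 1 = a
  cinv : A → A
  cinv_circ : ∀ a : A, circ (cinv a) a = 1
  compat : ∀ a b c : A, circ a (b * c) = circ a b * a⁻¹ * circ a c

namespace SkewLeftBrace

variable {A : Type*} [SkewLeftBrace A]

/-- Type synonym for `A` carrying the multiplicative group `(A, ∘)`. -/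
def Circ (A : Type*) := A

def toCirc {A : Type*} : A → Circ A := fun a => a
def ofCirc {A : Type*} : Circ A → A := fun a => a

instance Circ.instGroup : Group (Circ A) where
  mul a b := toCirc (circ (ofCirc a) (ofCirc b))
  one := toCirc 1
  inv a := toCirc (cinv (ofCirc a))
  mul_assoc a b c := circ_assoc (A := A) a b c
  one_mul a := one_circ (A := A) a
  mul_one a := circ_one (A := A) a
  inv_mul_cancel a := cinv_circ (A := A) a

/-- The lambda map `λ_a(b) = a⁻¹ * (a ∘ b)`. -/
def lam (a b : A) : A := a⁻¹ * circ a b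

/-- The opposite lambda map `λᵒᵖ_a(b) = (a ∘ b) * a⁻¹`. -/
def lamOp (a b : A) : A := circ a b * a⁻¹

lemma circ_cinv (a : A) : circ a (cinv a) = 1 := mul_inv_cancel (toCirc a)

lemma circ_inv (a b : A) : circ a b⁻¹ = a * (circ a b)⁻¹ * a := by
  have h := compat a b b⁻¹
  rw [mul_inv_cancel, circ_one] at h
  have h2 : circ a b * a⁻¹ * circ a b⁻¹ = a := h.symm
  calc circ a b⁻¹ = (circ a b * a⁻¹)⁻¹ * (circ a b * a⁻¹ * circ a b⁻¹) := by group
    _ = a * (circ a b)⁻¹ * a := by rw [h2]; group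

/-- `λ_a` as an automorphism of `(A, *)`. -/
def lamEquiv (a : A) : A ≃* A where
  toFun := lam a
  invFun b := circ (cinv a) (a * b)
  left_inv b := by
    show circ (cinv a) (a * (a⁻¹ * circ a b)) = b
    rw [mul_inv_cancel_left, ← circ_assoc, cinv_circ, one_circ]
  right_inv b := by
    show a⁻¹ * circ a (circ (cinv a) (a * b)) = b
    rw [← circ_assoc, circ_cinv, one_circ, inv_mul_cancel_left]
  map_mul' b c := by
    show a⁻¹ * circ a (b * c) = (a⁻¹ * circ a b) * (a⁻¹ * circ a c)
    rw [compat]; group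

lemma lam_circ (a b c : A) : lam (circ a b) c = lam a (lam b c) := by
  unfold lam
  rw [circ_assoc, compat, circ_inv]
  group

/-- The lambda map as a group homomorphism `(A, ∘) → Aut(A, *)`. -/
def lamHom : Circ A →* MulAut A where
  toFun a := lamEquiv (ofCirc a)
  map_one' := by
    ext b
    show lam (1 : A) b = b
    simp [lam, one_circ]
  map_mul' a b := by
    ext c
    rw [MulAut.mul_apply]
    exact lam_circ (ofCirc a) (ofCirc b) c

/-- `λᵒᵖ_a` as an automorphism of `(A, *)`. -/
def lamOpEquiv (a : A) : MulAut A := MulAut.conj a * lamEquiv a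

lemma lamOpEquiv_apply (a b : A) : lamOpEquiv a b = lamOp a b := by
  show a * (a⁻¹ * circ a b) * a⁻¹ = circ a b * a⁻¹
  group

lemma lamOp_circ (a b c : A) : lamOp (circ a b) c = lamOp a (lamOp b c) := by
  unfold lamOp
  rw [circ_assoc, compat, circ_inv]
  group

/-- The opposite lambda map as a group homomorphism `(A, ∘) → Aut(A, *)`. -/
def lamOpHom : Circ A →* MulAut A where
  toFun a := lamOpEquiv (ofCirc a)
  map_one' := by
    ext b
    rw [lamOpEquiv_apply]
    show circ (1 : A) b * (1 : A)⁻¹ = b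
    rw [one_circ]; group
  map_mul' a b := by
    ext c
    rw [MulAut.mul_apply, lamOpEquiv_apply, lamOpEquiv_apply, lamOpEquiv_apply]
    exact lamOp_circ (ofCirc a) (ofCirc b) c

/-- The group `Λ_{Aᵒᵖ} = (A,·) ⋊_{λᵒᵖ} (A,∘)`. -/
abbrev LambdaOp (A : Type*) [SkewLeftBrace A] := SemidirectProduct A (Circ A) lamOpHom

/-- The group `Λ_A = (A,·) ⋊_{λ} (A,∘)`. -/
abbrev Lambda (A : Type*) [SkewLeftBrace A] := SemidirectProduct A (Circ A) lamHom

/-- The skew brace commutator `A'`: the subgroup of `(A,·)` generated by all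
`a*b*a⁻¹*b⁻¹` and all `a * λ_b(a⁻¹)`. -/
def braceCommutator (A : Type*) [SkewLeftBrace A] : Subgroup A :=
  Subgroup.closure
    {x : A | (∃ a b : A, x = a * b * a⁻¹ * b⁻¹) ∨ (∃ a b : A, x = a * lam b a⁻¹)}

instance braceCommutator_normal : (braceCommutator A).Normal := by
  constructor
  intro x hx g
  have h1 : g * x * g⁻¹ * x⁻¹ ∈ braceCommutator A :=
    Subgroup.subset_closure (Or.inl ⟨g, x, rfl⟩)
  have h2 : g * x * g⁻¹ = (g * x * g⁻¹ * x⁻¹) * x := by group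
  rw [h2]
  exact mul_mem h1 hx

/-- `Fix(λ) = {x : λ_a(x) = x for all a}`. -/
def fixLam (A : Type*) [SkewLeftBrace A] : Set A := {x | ∀ a, lam a x = x}

/-- The annihilator `Ann(A) = Ker(λ) ∩ Z(A,·) ∩ Fix(λ)` as a set. -/
def annSet (A : Type*) [SkewLeftBrace A] : Set A :=
  {x | (∀ b, lam x b = b) ∧ (∀ a, a * x = x * a) ∧ (∀ a, lam a x = x)}

end SkewLeftBrace

open SkewLeftBrace

/-- `ψ(a,b) = (a·b, b)` is a group isomorphism `Λ_{Aᵒᵖ} → Λ_A`. -/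
theorem lambdaOp_iso_lambda (A : Type*) [SkewLeftBrace A] :
    ∃ ψ : LambdaOp A ≃* Lambda A,
      ∀ x : LambdaOp A, ψ x = ⟨x.left * ofCirc x.right, x.right⟩ := by
  refine ⟨{ toFun := fun x => ⟨x.left * ofCirc x.right, x.right⟩
            invFun := fun x => ⟨x.left * (ofCirc x.right)⁻¹, x.right⟩
            left_inv := fun x => by ext <;> simp
            right_inv := fun x => by ext <;> simp
            map_mul' := fun x y => by
              ext
              · show (x * y).left * ofCirc (x * y).right
                  = (x.left * ofCirc x.right) * lamHom x.right (y.left * ofCirc y.right)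
                rw [SemidirectProduct.mul_left, SemidirectProduct.mul_right]
                rw [show (lamOpHom x.right) y.left = lamOp (ofCirc x.right) y.left from
                  lamOpEquiv_apply _ _]
                show x.left * lamOp (ofCirc x.right) y.left *
                    circ (ofCirc x.right) (ofCirc y.right)
                  = x.left * ofCirc x.right * lam (ofCirc x.right) (y.left * ofCirc y.right)
                unfold lam lamOp
                rw [compat]
                group
              · rfl }, fun x => rfl⟩
end

section
/- Let A be a skew left brace and Λ_{Aᵒᵖ} = (A,·) ⋊_{λᵒᵖ} (A,∘). An element (x,y) lies in the center Z(Λ_{Aᵒᵖ}) if and only if y ∈ Z(A,∘) and x·y·λ_y(a)·y⁻¹ = a·b·λ_b(x)·b⁻¹ for all a,b ∈ A. -/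
open SkewLeftBrace

/-- `(x,y) ∈ Z(Λ_{Aᵒᵖ})` iff `y ∈ Z(A,∘)` and
`x·y·λ_y(a)·y⁻¹ = a·b·λ_b(x)·b⁻¹` for all `a, b ∈ A`. -/
theorem mem_center_lambdaOp_iff (A : Type*) [SkewLeftBrace A] (x y : A) :
    (⟨x, toCirc y⟩ : LambdaOp A) ∈ Subgroup.center (LambdaOp A) ↔
      (toCirc y ∈ Subgroup.center (Circ A) ∧
        ∀ a b : A, x * y * lam y a * y⁻¹ = a * b * lam b x * b⁻¹) := by
  have key : ∀ a b : A, (x * y * lam y a * y⁻¹ = a * b * lam b x * b⁻¹) ↔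
      (x * lamOpHom (toCirc y) a = a * lamOpHom (toCirc b) x) := by
    intro a b
    have h1 : (lamOpHom (toCirc y) a : A) = y * lam y a * y⁻¹ := by
      show lamOpEquiv y a = _
      rw [lamOpEquiv_apply]; unfold lamOp lam; group
    have h2 : (lamOpHom (toCirc b) x : A) = b * lam b x * b⁻¹ := by
      show lamOpEquiv b x = _
      rw [lamOpEquiv_apply]; unfold lamOp lam; group
    rw [h1, h2]; constructor <;> intro h <;> (simp only [mul_assoc] at h ⊢; exact h)
  rw [Subgroup.mem_center_iff]
  constructor
  · intro h
    constructor
    · rw [Subgroup.mem_center_iff]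
      intro b
      have := congrArg SemidirectProduct.right (h ⟨1, b⟩)
      simpa using this
    · intro a b
      have := congrArg SemidirectProduct.left (h ⟨a, toCirc b⟩)
      simp only [SemidirectProduct.mul_left] at this
      rw [key]
      exact this.symm
  · rintro ⟨hy, hx⟩ ⟨a, b⟩
    rw [Subgroup.mem_center_iff] at hy
    ext
    · show a * lamOpHom b x = x * lamOpHom (toCirc y) a
      exact ((key a b).mp (hx a b)).symm
    · exact hy b
end

section
/- Let A be a skew left brace, λ its lambda map, and Λ_{Aᵒᵖ} = (A,·) ⋊_{λᵒᵖ} (A,∘). Then (x,1) ∈ Z(Λ_{Aᵒᵖ}) if and only if x ∈ Z(A,·) ∩ Fix(λ), where Fix(λ) = {x ∈ A : λ_a(x) = x for all a ∈ A}. -/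
open SkewLeftBrace

namespace SemidirectProduct

variable {N G : Type*} [Group N] [Group G] {φ : G →* MulAut N}

theorem mul_inl_eq_inl_mul_iff (n : N) (g : N ⋊[φ] G) :
    g * inl n = inl n * g ↔ g.left * φ g.right n = n * g.left := by
  simp [SemidirectProduct.ext_iff]

theorem inl_mem_center_iff (n : N) :
    inl n ∈ Subgroup.center (N ⋊[φ] G) ↔ n ∈ Subgroup.center N ∧ ∀ g, φ g n = n := by
  simp only [Subgroup.mem_center_iff, mul_inl_eq_inl_mul_iff]
  constructor
  · intro h
    exact ⟨fun a => by simpa using h (inl a), fun g => by simpa using h (inr g)⟩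
  · rintro ⟨hcomm, hfix⟩ g
    rw [hfix, hcomm]

end SemidirectProduct

namespace SkewLeftBrace

variable {A : Type*} [SkewLeftBrace A]

theorem lamOp_eq_mul_lam_mul_inv (a b : A) : lamOp a b = a * lam a b * a⁻¹ := by
  simp [lamOp, lam]

theorem lamOp_eq_self_iff_lam_eq_self {a x : A} (hx : x ∈ Subgroup.center A) :
    lamOp a x = x ↔ lam a x = x := by
  rw [lamOp_eq_mul_lam_mul_inv, mul_inv_eq_iff_eq_mul, ← Subgroup.mem_center_iff.1 hx a,
    mul_right_inj]

theorem lamOpHom_apply (a : Circ A) (b : A) : lamOpHom a b = lamOp (ofCirc a) b :=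
  lamOpEquiv_apply (ofCirc a) b

end SkewLeftBrace

/-- `(x,1) ∈ Z(Λ_{Aᵒᵖ})` iff `x ∈ Z(A,·) ∩ Fix(λ)`. -/
theorem mem_center_lambdaOp_left_iff (A : Type*) [SkewLeftBrace A] (x : A) :
    (⟨x, 1⟩ : LambdaOp A) ∈ Subgroup.center (LambdaOp A) ↔
      (x ∈ Subgroup.center A ∧ x ∈ fixLam A) := by
  refine (SemidirectProduct.inl_mem_center_iff x).trans (and_congr_right fun hx => ?_)
  refine forall_congr' fun a => ?_
  rw [lamOpHom_apply]
  exact lamOp_eq_self_iff_lam_eq_self hx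
end

section
/- Let A be a skew left brace and Λ_{Aᵒᵖ} = (A,·) ⋊_{λᵒᵖ} (A,∘). If (x,y) ∈ Z(Λ_{Aᵒᵖ}), then λ_y(a) = y⁻¹·x⁻¹·a·x·y and λ_a(y) = a⁻¹·x⁻¹·a·x·y for all a ∈ A. -/
open SkewLeftBrace

/-- if `(x,y) ∈ Z(Λ_{Aᵒᵖ})`, then `λ_y(a) = y⁻¹·x⁻¹·a·x·y` and
`λ_a(y) = a⁻¹·x⁻¹·a·x·y` for all `a ∈ A`. -/
theorem center_lambdaOp_lam_eq (A : Type*) [SkewLeftBrace A] (x y : A)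
    (h : (⟨x, toCirc y⟩ : LambdaOp A) ∈ Subgroup.center (LambdaOp A)) :
    ∀ a : A, lam y a = y⁻¹ * x⁻¹ * a * x * y ∧ lam a y = a⁻¹ * x⁻¹ * a * x * y := by
  intro a
  rw [Subgroup.mem_center_iff] at h
  have h1 := h ⟨a, toCirc 1⟩
  have h2 := h ⟨1, toCirc a⟩
  have e1 : a * (lamOpHom (toCirc (1:A)) x) = x * (lamOpHom (toCirc y) a) :=
    congrArg SemidirectProduct.left h1
  have e2 : circ a y = circ y a := congrArg (fun z : LambdaOp A => ofCirc z.right) h2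
  have hone : lamOpHom (toCirc (1:A)) x = x := by
    have : (toCirc (1:A)) = (1 : Circ A) := rfl
    rw [this, map_one]; rfl
  rw [hone] at e1
  have e3 : lamOpHom (toCirc y) a = lamOp y a := lamOpEquiv_apply y a
  rw [e3] at e1
  have hcya : circ y a = x⁻¹ * a * x * y := by
    have := e1
    unfold lamOp at this
    calc circ y a = x⁻¹ * (x * (circ y a * y⁻¹)) * y := by group
      _ = x⁻¹ * (a * x) * y := by rw [← this]
      _ = x⁻¹ * a * x * y := by group
  constructor
  · unfold lam; rw [hcya]; group
  · unfold lam; rw [e2, hcya]; group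
end

section
/- Let A be a skew left brace with annihilator Ann(A) = Ker(λ) ∩ Z(A,·) ∩ Fix(λ). Then Ann(A) × Ann(A) is contained in the center of Λ_{Aᵒᵖ} = (A,·) ⋊_{λᵒᵖ} (A,∘). -/
open SkewLeftBrace

/-- `Ann(A) × Ann(A)` is contained in the center of `Λ_{Aᵒᵖ}`. -/
theorem ann_prod_ann_le_center (A : Type*) [SkewLeftBrace A] :
    ∀ x ∈ annSet A, ∀ y ∈ annSet A,
      (⟨x, toCirc y⟩ : LambdaOp A) ∈ Subgroup.center (LambdaOp A) := by
  intro x hx y hy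
  obtain ⟨hx1, hx2, hx3⟩ := hx
  obtain ⟨hy1, hy2, hy3⟩ := hy
  have circ_y : ∀ a : A, circ y a = y * a := fun a => eq_mul_of_inv_mul_eq (hy1 a)
  have circ_x_ : ∀ a : A, circ a x = a * x := fun a => eq_mul_of_inv_mul_eq (hx3 a)
  have circ_y_ : ∀ a : A, circ a y = a * y := fun a => eq_mul_of_inv_mul_eq (hy3 a)
  rw [Subgroup.mem_center_iff]
  rintro ⟨a, b⟩
  refine SemidirectProduct.ext ?_ ?_
  · show a * lamOpEquiv (ofCirc b) x = x * lamOpEquiv y a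
    rw [lamOpEquiv_apply, lamOpEquiv_apply]
    unfold lamOp
    rw [circ_x_ (ofCirc b), circ_y]
    have h : a * (ofCirc b * x * (ofCirc b)⁻¹) = a * x := by rw [hx2 (ofCirc b)]; group
    rw [h, hx2 a, ← hy2 a]
    group
  · show toCirc (circ (ofCirc b) y) = toCirc (circ y (ofCirc b))
    rw [circ_y_, circ_y, hy2]
end

section
/- Let A be a left brace (a skew left brace with abelian additive group). Then the center of Λ_{Aᵒᵖ} = (A,·) ⋊_{λᵒᵖ} (A,∘) equals Fix(λ) × Ann(A), where Fix(λ) = {x : λ_a(x) = x for all a} and Ann(A) = Ker(λ) ∩ Z(A,·) ∩ Fix(λ). -/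
open SkewLeftBrace

/-- for a left brace (abelian additive group),
`Z(Λ_{Aᵒᵖ}) = Fix(λ) × Ann(A)`. -/
theorem center_lambdaOp_of_leftBrace (A : Type*) [SkewLeftBrace A]
    (habelian : ∀ a b : A, a * b = b * a) (x y : A) :
    (⟨x, toCirc y⟩ : LambdaOp A) ∈ Subgroup.center (LambdaOp A) ↔
      (x ∈ fixLam A ∧ y ∈ annSet A) := by
  have hlamOp : ∀ a b : A, lamOp a b = lam a b := by
    intro a b; unfold lamOp lam; rw [habelian]
  have hmul : ∀ a c : A, ∀ b d : Circ A,
      (⟨a, b⟩ : LambdaOp A) * ⟨c, d⟩ = ⟨a * lamOp (ofCirc b) c, toCirc (circ (ofCirc b) (ofCirc d))⟩ := by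
    intro a c b d
    rw [SemidirectProduct.mul_def]
    congr 1
    show a * lamOpEquiv (ofCirc b) c = _
    rw [lamOpEquiv_apply]
  rw [Subgroup.mem_center_iff]
  constructor
  · intro h
    have key : ∀ c d : A, c * lamOp d x = x * lamOp y c ∧ circ d y = circ y d := by
      intro c d
      have := h ⟨c, toCirc d⟩
      rw [hmul, hmul] at this
      have h1 := congrArg SemidirectProduct.left this
      have h2 := congrArg SemidirectProduct.right this
      exact ⟨h1, h2⟩
    have hcirc : ∀ d : A, circ d y = circ y d := fun d => (key 1 d).2
    have hlam1 : ∀ d : A, lamOp d x = x := by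
      intro d
      have := (key 1 d).1
      rw [one_mul] at this
      rw [this]
      show x * lamOp y 1 = x
      unfold lamOp
      rw [circ_one]; group
    have hfix : x ∈ fixLam A := fun a => by rw [← hlamOp]; exact hlam1 a
    have hker : ∀ c : A, lam y c = c := by
      intro c
      have := (key c 1).1
      rw [hlam1 1, hlamOp] at this
      -- this : c * x = x * lam y c
      have := this.symm
      rw [habelian x (lam y c)] at this
      exact mul_right_cancel this
    have hlamy : ∀ a : A, lam a y = y := by
      intro a
      have h1 : circ y a = y * a := by
        have : circ y a = y * lam y a := by unfold lam; group
        rw [this, hker]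
      have h2 : circ a y = y * a := by rw [hcirc, h1]
      unfold lam
      rw [h2, habelian y a]; group
    exact ⟨hfix, hker, fun a => habelian a y, hlamy⟩
  · rintro ⟨hfix, hker, _, hlamy⟩
    intro g
    obtain ⟨c, d⟩ := g
    rw [hmul, hmul]
    have h1 : circ (ofCirc d) y = circ y (ofCirc d) := by
      have ha : circ y (ofCirc d) = y * ofCirc d := by
        have : circ y (ofCirc d) = y * lam y (ofCirc d) := by unfold lam; group
        rw [this, hker]
      have hb : circ (ofCirc d) y = ofCirc d * y := by
        have : circ (ofCirc d) y = ofCirc d * lam (ofCirc d) y := by unfold lam; group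
        rw [this, hlamy]
      rw [ha, hb, habelian]
    have h2 : c * lamOp (ofCirc d) x = x * lamOp y c := by
      rw [hlamOp, hlamOp, hfix (ofCirc d), hker c, habelian]
    rw [h2]
    show ({ left := x * lamOp y c, right := toCirc (circ (ofCirc d) y)} : LambdaOp A) =
      { left := x * lamOp y c, right := toCirc (circ y (ofCirc d))}
    rw [h1]
end

section
/- Let A be a skew left brace with lambda map λ. The commutator subgroup (A,∘)' of the multiplicative group is contained in the skew brace commutator A', the subgroup of (A,·) generated by all a·b·a⁻¹·b⁻¹ and all a·λ_b(a⁻¹). -/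
open SkewLeftBrace

lemma lam_mk_eq {A : Type*} [SkewLeftBrace A] (a b : A) :
    (QuotientGroup.mk (lam a b) : A ⧸ braceCommutator A) = QuotientGroup.mk b := by
  rw [QuotientGroup.eq]
  have h1 : b * lam a b⁻¹ ∈ braceCommutator A :=
    Subgroup.subset_closure (Or.inr ⟨b, a, rfl⟩)
  have hinv : lam a b⁻¹ = (lam a b)⁻¹ := map_inv (lamEquiv a) b
  rw [hinv] at h1
  have h2 := (braceCommutator_normal (A := A)).conj_mem _ h1 b⁻¹
  have h3 : b⁻¹ * (b * (lam a b)⁻¹) * b⁻¹⁻¹ = (lam a b)⁻¹ * b := by group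
  rwa [h3] at h2

/-- The quotient map `A → A ⧸ A'` as a homomorphism from `(A, ∘)`. -/
def circToQuot (A : Type*) [SkewLeftBrace A] : Circ A →* A ⧸ braceCommutator A where
  toFun x := QuotientGroup.mk (ofCirc x)
  map_one' := rfl
  map_mul' a b := by
    show (QuotientGroup.mk (circ (ofCirc a) (ofCirc b)) : A ⧸ braceCommutator A) = _
    have h : circ (ofCirc a) (ofCirc b) = ofCirc a * lam (ofCirc a) (ofCirc b) := by
      unfold lam; group
    rw [h, QuotientGroup.mk_mul, lam_mk_eq]

/-- the commutator subgroup of `(A,∘)` is contained in the skew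
brace commutator `A'`. -/
theorem circ_commutator_le_braceCommutator (A : Type*) [SkewLeftBrace A] :
    ∀ x : Circ A, x ∈ commutator (Circ A) → ofCirc x ∈ braceCommutator A := by
  have hker : commutator (Circ A) ≤ (circToQuot A).ker := by
    rw [commutator, Subgroup.commutator_le]
    intro a _ b _
    simp only [MonoidHom.mem_ker, commutatorElement_def, map_mul, map_inv]
    have hcomm : circToQuot A a * circToQuot A b = circToQuot A b * circToQuot A a := by
      show (QuotientGroup.mk (ofCirc a * ofCirc b) : A ⧸ braceCommutator A) =
        QuotientGroup.mk (ofCirc b * ofCirc a)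
      rw [QuotientGroup.eq]
      exact Subgroup.subset_closure (Or.inl ⟨(ofCirc b)⁻¹, (ofCirc a)⁻¹, by group⟩)
    rw [hcomm]
    group
  intro x hx
  have := hker hx
  rw [MonoidHom.mem_ker] at this
  exact (QuotientGroup.eq_one_iff (ofCirc x)).mp this
end

section
/- Let A be a skew left brace. The commutators of A and of its opposite skew brace Aᵒᵖ = (A, ·ᵒᵖ, ∘) coincide as subsets of A. That is, the subgroup of (A,·) generated by {a·b·a⁻¹·b⁻¹, a·λ_b(a⁻¹) : a,b ∈ A} equals the subgroup of (A,·ᵒᵖ) generated by {a ·ᵒᵖ b ·ᵒᵖ a⁻¹ ·ᵒᵖ b⁻¹, a ·ᵒᵖ λᵒᵖ_b(a⁻¹) : a,b ∈ A}. -/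
open SkewLeftBrace

/-- Auxiliary: in any subgroup containing all commutators, `a*b⁻¹*u` and `u*b⁻¹*a`
differ by an element of the subgroup. -/
lemma swap_mem_aux {G : Type*} [Group G] (N : Subgroup G)
    (hc : ∀ p q : G, p * q * p⁻¹ * q⁻¹ ∈ N) (a b u : G) :
    (a * b⁻¹ * u) * (u * b⁻¹ * a)⁻¹ ∈ N := by
  have h1 := hc (a * b⁻¹) u
  have h2 := hc u (a * b⁻¹ * a⁻¹ * b)
  have h3 := hc a b⁻¹
  have key : (a * b⁻¹ * u) * (u * b⁻¹ * a)⁻¹ =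
      ((a * b⁻¹) * u * (a * b⁻¹)⁻¹ * u⁻¹) *
        (u * (a * b⁻¹ * a⁻¹ * b) * u⁻¹ * (a * b⁻¹ * a⁻¹ * b)⁻¹) *
        (a * b⁻¹ * a⁻¹ * (b⁻¹)⁻¹) := by group
  rw [key]
  exact mul_mem (mul_mem h1 h2) h3

/-- the skew brace commutator of `A` and of its opposite
`Aᵒᵖ = (A, ·ᵒᵖ, ∘)` coincide as subsets of `A`. The commutator of `Aᵒᵖ` is the
subgroup of `(A,·ᵒᵖ)` generated by the `·ᵒᵖ`-commutators and the elements
`a ·ᵒᵖ λᵒᵖ_b(a⁻¹)` (note `λᵒᵖ` is the lambda map of `Aᵒᵖ`). -/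

theorem braceCommutator_op_eq (A : Type*) [SkewLeftBrace A] :
    MulOpposite.unop '' ((Subgroup.closure
        {x : Aᵐᵒᵖ | (∃ a b : Aᵐᵒᵖ, x = a * b * a⁻¹ * b⁻¹) ∨
          (∃ a b : A, x = MulOpposite.op a * MulOpposite.op (lamOp b a⁻¹))}
        : Subgroup Aᵐᵒᵖ) : Set Aᵐᵒᵖ)
      = (braceCommutator A : Set A) := by
  set s : Set Aᵐᵒᵖ :=
    {x : Aᵐᵒᵖ | (∃ a b : Aᵐᵒᵖ, x = a * b * a⁻¹ * b⁻¹) ∨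
      (∃ a b : A, x = MulOpposite.op a * MulOpposite.op (lamOp b a⁻¹))} with hs
  have himg : MulOpposite.unop '' ((Subgroup.closure s : Subgroup Aᵐᵒᵖ) : Set Aᵐᵒᵖ)
      = (((Subgroup.closure s).unop : Subgroup A) : Set A) := by
    ext x
    constructor
    · rintro ⟨y, hy, rfl⟩
      simpa [Subgroup.mem_unop] using hy
    · intro hx
      exact ⟨MulOpposite.op x, hx, rfl⟩
  rw [himg, Subgroup.unop_closure]
  suffices h : Subgroup.closure (MulOpposite.op ⁻¹' s) = braceCommutator A by rw [h]
  set T : Set A := MulOpposite.op ⁻¹' s with hT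
  -- T contains all commutators of A
  have hTcomm : ∀ p q : A, p * q * p⁻¹ * q⁻¹ ∈ T := by
    intro p q
    left
    refine ⟨MulOpposite.op q⁻¹, MulOpposite.op p⁻¹, ?_⟩
    simp [mul_assoc]
  have hNcomm : ∀ p q : A, p * q * p⁻¹ * q⁻¹ ∈ Subgroup.closure T :=
    fun p q => Subgroup.subset_closure (hTcomm p q)
  have hBcomm : ∀ p q : A, p * q * p⁻¹ * q⁻¹ ∈ braceCommutator A :=
    fun p q => Subgroup.subset_closure (Or.inl ⟨p, q, rfl⟩)
  apply le_antisymm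
  · rw [Subgroup.closure_le]
    intro x hx
    rcases hx with ⟨a, b, hab⟩ | ⟨a, b, hab⟩
    · -- an opposite commutator: its unop is a commutator
      have hx' : x = b.unop⁻¹ * a.unop⁻¹ * (b.unop⁻¹)⁻¹ * (a.unop⁻¹)⁻¹ := by
        have : x = MulOpposite.unop (a * b * a⁻¹ * b⁻¹) := by
          rw [← hab, MulOpposite.unop_op]
        simp only [MulOpposite.unop_mul, MulOpposite.unop_inv] at this
        rw [this]; group
      rw [hx']
      exact hBcomm _ _
    · -- x = lamOp b a⁻¹ * a = (circ b a⁻¹) * b⁻¹ * a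
      have hx' : x = circ b a⁻¹ * b⁻¹ * a := by
        have : x = MulOpposite.unop (MulOpposite.op a * MulOpposite.op (lamOp b a⁻¹)) := by
          rw [← hab, MulOpposite.unop_op]
        simpa [lamOp, mul_assoc] using this
      have hgen : a * b⁻¹ * circ b a⁻¹ ∈ braceCommutator A := by
        apply Subgroup.subset_closure
        right
        exact ⟨a, b, by simp [lam, mul_assoc]⟩
      have hswap := swap_mem_aux (braceCommutator A) hBcomm a b (circ b a⁻¹)
      have : x = ((a * b⁻¹ * circ b a⁻¹) * (circ b a⁻¹ * b⁻¹ * a)⁻¹)⁻¹ *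
          (a * b⁻¹ * circ b a⁻¹) := by rw [hx']; group
      rw [this]
      exact mul_mem (inv_mem hswap) hgen
  · rw [braceCommutator, Subgroup.closure_le]
    intro x hx
    rcases hx with ⟨a, b, hab⟩ | ⟨a, b, hab⟩
    · rw [hab]; exact hNcomm a b
    · -- x = a * lam b a⁻¹ = a * b⁻¹ * circ b a⁻¹
      have hx' : x = a * b⁻¹ * circ b a⁻¹ := by rw [hab]; simp [lam, mul_assoc]
      have hgen : circ b a⁻¹ * b⁻¹ * a ∈ Subgroup.closure T := by
        apply Subgroup.subset_closure
        right
        refine ⟨a, b, ?_⟩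
        rw [← MulOpposite.op_mul]
        congr 1
      have hswap := swap_mem_aux (Subgroup.closure T) hNcomm a b (circ b a⁻¹)
      have : x = ((a * b⁻¹ * circ b a⁻¹) * (circ b a⁻¹ * b⁻¹ * a)⁻¹) *
          (circ b a⁻¹ * b⁻¹ * a) := by rw [hx']; group
      rw [this]
      exact mul_mem hswap hgen
end

section
/- Let A be a skew left brace and let ψ : Λ_{Aᵒᵖ} → Aut(A,·) be defined by ψ(a,b)(x) = a·λᵒᵖ_b(x)·a⁻¹. Then ψ is a group homomorphism, and Fix(ψ) := {x ∈ A : ψ(a,b)(x) = x for all a,b ∈ A} equals Z(A,·) ∩ Fix(λ). -/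
open SkewLeftBrace

/-- `ψ(a,b)(x) = a·λᵒᵖ_b(x)·a⁻¹` defines a group homomorphism
`Λ_{Aᵒᵖ} → Aut(A,·)`, and `Fix(ψ) = Z(A,·) ∩ Fix(λ)`. -/
theorem psi_hom_and_fix (A : Type*) [SkewLeftBrace A] :
    (∃ Ψ : LambdaOp A →* MulAut A,
        ∀ a b x : A, Ψ ⟨a, toCirc b⟩ x = a * lamOp b x * a⁻¹) ∧
    {x : A | ∀ a b : A, a * lamOp b x * a⁻¹ = x}
      = {x : A | x ∈ Subgroup.center A ∧ x ∈ fixLam A} := by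
  constructor
  · refine ⟨SemidirectProduct.lift (MulAut.conj) lamOpHom ?_, ?_⟩
    · intro g
      ext n x
      simp only [MonoidHom.comp_apply, MulEquiv.coe_toMonoidHom, MulAut.conj_apply]
      show lamOpEquiv (ofCirc g) n * x * (lamOpEquiv (ofCirc g) n)⁻¹ =
        lamOpEquiv (ofCirc g) (n * (lamOpEquiv (ofCirc g)).symm x * n⁻¹)
      simp [map_mul, map_inv]
    · intro a b x
      show MulAut.conj a (lamOpEquiv b x) = a * lamOp b x * a⁻¹
      rw [lamOpEquiv_apply, MulAut.conj_apply]
  · ext x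
    simp only [Set.mem_setOf_eq]
    constructor
    · intro h
      have hc : ∀ a : A, a * x * a⁻¹ = x := by
        intro a
        have := h a 1
        rwa [lamOp, one_circ, inv_one, mul_one] at this
      have hfix : ∀ b : A, lamOp b x = x := by
        intro b
        have := h 1 b
        rwa [one_mul, inv_one, mul_one] at this
      refine ⟨Subgroup.mem_center_iff.2 fun g => ?_, fun a => ?_⟩
      · have := hc g; calc g * x = g * x * g⁻¹ * g := by group
          _ = x * g := by rw [this]
      · have := hfix a
        unfold lamOp at this
        unfold lam
        have hx : circ a x = x * a := by
          calc circ a x = circ a x * a⁻¹ * a := by group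
            _ = x * a := by rw [this]
        rw [hx]
        have := Subgroup.mem_center_iff.1 (by
          exact Subgroup.mem_center_iff.2 fun g => by
            have h2 := hc g
            calc g * x = g * x * g⁻¹ * g := by group
              _ = x * g := by rw [h2]) a⁻¹
        calc a⁻¹ * (x * a) = a⁻¹ * x * a := by group
          _ = x * a⁻¹ * a := by rw [this]
          _ = x := by group
    · rintro ⟨hz, hf⟩ a b
      have hzc := Subgroup.mem_center_iff.1 hz
      have : lamOp b x = x := by
        have := hf b
        unfold lam at this
        unfold lamOp
        have hx : circ b x = b * x := by
          calc circ b x = b * (b⁻¹ * circ b x) := by group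
            _ = b * x := by rw [this]
        rw [hx, mul_assoc, ← hzc b⁻¹]
        group
      rw [this, mul_assoc, ← hzc a⁻¹]
      group
end
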